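/- Let A ∈ ℝ^{m×n} and let S ∈ ℝ^{k×m} have orthonormal rows. If S A = Û Σ̂ V̂ᵀ is the SVD of S A and V̂ consists of the right singular vectors, then ‖A − (A V̂)_r V̂ᵀ‖_F² ≤ ‖A − Sᵀ (S A)_r‖_F², where for a matrix X, X_r denotes a best rank-r approximation of X in Frobenius norm. Equivalently, ∑_{i=1}^r σ_i(A V̂)² ≥ ∑_{i=1}^r σ_i(S A)². -/

import Mathlib

open Matrix BigOperators Finset

/-- Squared Frobenius norm of a real matrix. -/
noncomputable def frobSq {m n : ℕ} (A : Matrix (Fin m) (Fin n) ℝ) : ℝ :=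
  ∑ i, ∑ j, (A i j) ^ 2

theorem Matrix.isHermitian_transpose_mul_self {m n : Type*} [Fintype m]
    (A : Matrix m n ℝ) : (Aᵀ * A).IsHermitian := by
  simpa using Matrix.isHermitian_conjTranspose_mul_self A

/-- Squares of the singular values of `A`, in decreasing order, indexed by `ℕ`
(equal to `0` beyond the number of columns): the eigenvalues of `Aᵀ * A` sorted
decreasingly. -/
noncomputable def sValSq {m n : ℕ} (A : Matrix (Fin m) (Fin n) ℝ) : ℕ → ℝ :=
  fun i =>
    if h : i < n then
      (Matrix.isHermitian_transpose_mul_self A).eigenvalues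
        ((Tuple.sort (fun j => -(Matrix.isHermitian_transpose_mul_self A).eigenvalues j)) ⟨i, h⟩)
    else 0

/-- The `i`-th largest singular value (0-indexed) of a real matrix. -/
noncomputable def sVal {m n : ℕ} (A : Matrix (Fin m) (Fin n) ℝ) : ℕ → ℝ :=
  fun i => Real.sqrt (sValSq A i)

/-- `B` is a best rank-`r` approximation of `X` in Frobenius norm. -/
def IsBestRankApprox {p q : ℕ} (X B : Matrix (Fin p) (Fin q) ℝ) (r : ℕ) : Prop :=
  B.rank ≤ r ∧ ∀ Y : Matrix (Fin p) (Fin q) ℝ, Y.rank ≤ r → frobSq (X - B) ≤ frobSq (X - Y)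

section SCWAux

lemma frobSq_eq_trace {a b : ℕ} (Y : Matrix (Fin a) (Fin b) ℝ) :
    frobSq Y = Matrix.trace (Yᵀ * Y) := by
  unfold frobSq Matrix.trace
  simp only [Matrix.diag, Matrix.mul_apply, Matrix.transpose_apply, sq]
  rw [Finset.sum_comm]

lemma frobSq_nonneg {a b : ℕ} (Y : Matrix (Fin a) (Fin b) ℝ) : 0 ≤ frobSq Y := by
  unfold frobSq; positivity

lemma trace_transpose_mul_comm {a b : ℕ} (X Y : Matrix (Fin a) (Fin b) ℝ) :
    Matrix.trace (Yᵀ * X) = Matrix.trace (Xᵀ * Y) := by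
  rw [← Matrix.trace_transpose (Yᵀ * X), Matrix.transpose_mul, Matrix.transpose_transpose]

lemma frobSq_add {a b : ℕ} (X Y : Matrix (Fin a) (Fin b) ℝ) :
    frobSq (X + Y) = frobSq X + frobSq Y + 2 * Matrix.trace (Xᵀ * Y) := by
  simp only [frobSq_eq_trace, Matrix.transpose_add, Matrix.add_mul, Matrix.mul_add,
    Matrix.trace_add]
  linarith [trace_transpose_mul_comm X Y]

lemma frobSq_add_of_orth {a b : ℕ} {X Y : Matrix (Fin a) (Fin b) ℝ}
    (h : Matrix.trace (Xᵀ * Y) = 0) : frobSq (X + Y) = frobSq X + frobSq Y := by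
  rw [frobSq_add, h]; ring

lemma frobSq_mul_orthright {a n k : ℕ} (Y : Matrix (Fin a) (Fin k) ℝ)
    (V : Matrix (Fin n) (Fin k) ℝ) (hV : Vᵀ * V = 1) : frobSq (Y * Vᵀ) = frobSq Y := by
  rw [frobSq_eq_trace, frobSq_eq_trace, Matrix.transpose_mul, Matrix.transpose_transpose,
    Matrix.mul_assoc, Matrix.trace_mul_comm, Matrix.mul_assoc, Matrix.mul_assoc, hV,
    Matrix.mul_one]

lemma posSemidef_transpose_mul_self' {a b : ℕ} (Y : Matrix (Fin a) (Fin b) ℝ) :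
    (Yᵀ * Y).PosSemidef := by
  have := Matrix.posSemidef_conjTranspose_mul_self Y
  rwa [Matrix.conjTranspose_eq_transpose_of_trivial] at this

lemma sValSq_nonneg {a b : ℕ} (X : Matrix (Fin a) (Fin b) ℝ) (i : ℕ) : 0 ≤ sValSq X i := by
  unfold sValSq
  split
  · exact (posSemidef_transpose_mul_self' X).eigenvalues_nonneg _
  · exact le_refl 0

lemma sValSq_antitone {a b : ℕ} (X : Matrix (Fin a) (Fin b) ℝ) {i j : ℕ} (hij : i ≤ j) :
    sValSq X j ≤ sValSq X i := by
  by_cases hj : j < b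
  · have hi : i < b := lt_of_le_of_lt hij hj
    have hmono := Tuple.monotone_sort
      (fun t => -(Matrix.isHermitian_transpose_mul_self X).eigenvalues t)
    have h2 := hmono (a := ⟨i, hi⟩) (b := ⟨j, hj⟩) (Fin.mk_le_mk.mpr hij)
    simp only [Function.comp_apply] at h2
    unfold sValSq
    rw [dif_pos hi, dif_pos hj]
    linarith
  · unfold sValSq
    rw [dif_neg hj]
    exact sValSq_nonneg X i

lemma sValSq_eq_zero {a b : ℕ} (X : Matrix (Fin a) (Fin b) ℝ) {i : ℕ} (hi : b ≤ i) :
    sValSq X i = 0 := by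
  unfold sValSq; rw [dif_neg (not_lt.mpr hi)]


lemma weight_le (g p : ℕ → ℝ) (N r : ℕ)
    (hg0 : ∀ i, 0 ≤ g i) (hganti : ∀ i j : ℕ, i ≤ j → g j ≤ g i)
    (hp0 : ∀ i, i < N → 0 ≤ p i) (hp1 : ∀ i, i < N → p i ≤ 1)
    (hpsum : ∑ i ∈ Finset.range N, p i ≤ r) :
    ∑ i ∈ Finset.range N, p i * g i ≤ ∑ i ∈ Finset.range r, g i := by
  by_cases hNr : N ≤ r
  · calc ∑ i ∈ Finset.range N, p i * g i ≤ ∑ i ∈ Finset.range N, g i := by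
          apply Finset.sum_le_sum
          intro i hi
          have := hp1 i (Finset.mem_range.mp hi)
          have := hg0 i
          nlinarith [hp0 i (Finset.mem_range.mp hi)]
      _ ≤ ∑ i ∈ Finset.range r, g i :=
          Finset.sum_le_sum_of_subset_of_nonneg (Finset.range_subset_range.mpr hNr)
            (fun i _ _ => hg0 i)
  · push_neg at hNr
    have key : ∀ f : ℕ → ℝ, ∑ i ∈ Finset.range N, f i
        = ∑ i ∈ Finset.range r, f i + ∑ i ∈ Finset.Ico r N, f i := by
      intro f
      rw [Finset.range_eq_Ico,
        ← Finset.sum_Ico_consecutive _ (Nat.zero_le r) hNr.le]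
      rw [Finset.range_eq_Ico]
    set θ := g r with hθ
    have h1 : ∑ i ∈ Finset.Ico r N, p i * g i ≤ θ * ∑ i ∈ Finset.Ico r N, p i := by
      rw [Finset.mul_sum]
      apply Finset.sum_le_sum
      intro i hi
      obtain ⟨hri, hiN⟩ := Finset.mem_Ico.mp hi
      have := hganti r i hri
      have := hp0 i hiN
      nlinarith
    have h2 : ∑ i ∈ Finset.Ico r N, p i ≤ (r : ℝ) - ∑ i ∈ Finset.range r, p i := by
      have := key p
      linarith
    have h3 : θ * ((r : ℝ) - ∑ i ∈ Finset.range r, p i)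
        = ∑ i ∈ Finset.range r, θ * (1 - p i) := by
      rw [← Finset.mul_sum, Finset.sum_sub_distrib, Finset.sum_const, Finset.card_range]
      simp
    have h4 : ∑ i ∈ Finset.range r, θ * (1 - p i)
        ≤ ∑ i ∈ Finset.range r, (1 - p i) * g i := by
      apply Finset.sum_le_sum
      intro i hi
      have hiN : i < N := lt_trans (Finset.mem_range.mp hi) hNr
      have := hganti i r (le_of_lt (Finset.mem_range.mp hi))
      have := hp1 i hiN
      nlinarith
    have hθ0 : 0 ≤ θ := hg0 r
    have hfinal : ∑ i ∈ Finset.range r, p i * g i + ∑ i ∈ Finset.range r, (1 - p i) * g i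
        = ∑ i ∈ Finset.range r, g i := by
      rw [← Finset.sum_add_distrib]
      apply Finset.sum_congr rfl
      intro i _; ring
    have := key (fun i => p i * g i)
    nlinarith [mul_le_mul_of_nonneg_left h2 hθ0]

lemma trace_PtDP {N r : ℕ} (d : Fin N → ℝ) (P : Matrix (Fin N) (Fin r) ℝ) :
    Matrix.trace (Pᵀ * Matrix.diagonal d * P) = ∑ j, d j * ∑ c, (P j c)^2 := by
  rw [Matrix.mul_assoc, Matrix.trace_mul_comm, Matrix.mul_assoc]
  simp [Matrix.trace, Matrix.diag, Matrix.mul_apply, Matrix.diagonal_apply,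
    Matrix.transpose_apply, sq, Finset.mul_sum, ite_mul]

lemma kyfan_ub {a b r : ℕ} (X : Matrix (Fin a) (Fin b) ℝ) (W : Matrix (Fin b) (Fin r) ℝ)
    (hW : (1 - Wᵀ * W).PosSemidef) :
    Matrix.trace (Wᵀ * (Xᵀ * X) * W) ≤ ∑ i ∈ Finset.range r, sValSq X i := by
  have hH := Matrix.isHermitian_transpose_mul_self X
  set lam := hH.eigenvalues with hlam
  set σ := Tuple.sort (fun j => -lam j) with hσ
  set U : Matrix (Fin b) (Fin b) ℝ := (hH.eigenvectorUnitary : Matrix (Fin b) (Fin b) ℝ)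
    with hU
  have hspec : Xᵀ * X = U * Matrix.diagonal lam * Uᵀ := by
    have h := hH.spectral_theorem
    rw [RCLike.ofReal_real_eq_id, Function.id_comp] at h
    calc Xᵀ * X = Xᴴ * X := by rw [Matrix.conjTranspose_eq_transpose_of_trivial]
      _ = U * Matrix.diagonal lam * Uᴴ := h
      _ = U * Matrix.diagonal lam * Uᵀ := by
          rw [Matrix.conjTranspose_eq_transpose_of_trivial]
  have hUU : U * Uᵀ = 1 := by
    have h := (Matrix.mem_unitaryGroup_iff).mp hH.eigenvectorUnitary.2
    calc U * Uᵀ = U * Uᴴ := by rw [Matrix.conjTranspose_eq_transpose_of_trivial]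
      _ = U * star U := rfl
      _ = 1 := h
  set P := Uᵀ * W with hPdef
  have htr : Matrix.trace (Wᵀ * (Xᵀ * X) * W) = ∑ j, lam j * ∑ c, (P j c)^2 := by
    rw [hspec, ← trace_PtDP lam P, hPdef, Matrix.transpose_mul, Matrix.transpose_transpose]
    simp only [Matrix.mul_assoc]
  have hPP : Pᵀ * P = Wᵀ * W := by
    rw [hPdef, Matrix.transpose_mul, Matrix.transpose_transpose, Matrix.mul_assoc,
      ← Matrix.mul_assoc U, hUU, Matrix.one_mul]
  have hcontr : ∀ x : Fin r → ℝ, (P *ᵥ x) ⬝ᵥ (P *ᵥ x) ≤ x ⬝ᵥ x := by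
    intro x
    have h := hW.dotProduct_mulVec_nonneg x
    rw [star_trivial, Matrix.sub_mulVec, Matrix.one_mulVec, dotProduct_sub] at h
    have he : x ⬝ᵥ ((Wᵀ * W) *ᵥ x) = (P *ᵥ x) ⬝ᵥ (P *ᵥ x) := by
      rw [← hPP, ← Matrix.mulVec_mulVec, Matrix.dotProduct_mulVec, Matrix.vecMul_transpose]
    linarith
  set p : Fin b → ℝ := fun j => ∑ c, (P j c)^2 with hpdef
  have hp0 : ∀ j, 0 ≤ p j := fun j => Finset.sum_nonneg fun c _ => sq_nonneg _
  have hp1 : ∀ j, p j ≤ 1 := by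
    intro j
    set v : Fin r → ℝ := fun c => P j c with hv
    have hpj : (P *ᵥ v) j = p j := by
      simp [Matrix.mulVec, dotProduct, hpdef, hv, sq]
    have h1 : p j ^ 2 ≤ (P *ᵥ v) ⬝ᵥ (P *ᵥ v) := by
      calc p j ^ 2 = (P *ᵥ v) j * (P *ᵥ v) j := by rw [hpj]; ring
        _ ≤ ∑ i, (P *ᵥ v) i * (P *ᵥ v) i :=
            Finset.single_le_sum (f := fun i => (P *ᵥ v) i * (P *ᵥ v) i)
              (fun i _ => mul_self_nonneg _) (Finset.mem_univ j)
        _ = (P *ᵥ v) ⬝ᵥ (P *ᵥ v) := rfl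
    have h2 := hcontr v
    have h3 : v ⬝ᵥ v = p j := by simp [dotProduct, hpdef, hv, sq]
    nlinarith [hp0 j]
  have hpsum : ∑ j, p j ≤ (r : ℝ) := by
    have hcol : ∀ c : Fin r, (∑ j, (P j c)^2) ≤ 1 := by
      intro c
      have h := hcontr (Pi.single c 1)
      rw [Matrix.mulVec_single] at h
      simpa [dotProduct, Pi.single_apply, sq, mul_ite] using h
    calc ∑ j, p j = ∑ c : Fin r, ∑ j, (P j c)^2 := Finset.sum_comm
      _ ≤ ∑ _c : Fin r, (1:ℝ) := Finset.sum_le_sum fun c _ => hcol c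
      _ = r := by simp
  -- reindex by σ and apply weight_le
  set q : ℕ → ℝ := fun i => if h : i < b then p (σ ⟨i, h⟩) else 0 with hqdef
  have hstepA : ∑ j, lam j * p j = ∑ j, lam (σ j) * p (σ j) :=
    (Equiv.sum_comp σ (fun j => lam j * p j)).symm
  have hstepB : ∑ j, lam (σ j) * p (σ j) = ∑ i ∈ Finset.range b, q i * sValSq X i := by
    rw [← Fin.sum_univ_eq_sum_range (fun i => q i * sValSq X i) b]
    apply Finset.sum_congr rfl
    intro j _
    have hjb : (j : ℕ) < b := j.isLt
    simp only [hqdef, sValSq, dif_pos hjb, ← hlam, ← hσ, Fin.eta]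
    ring
  have hqsum : ∑ i ∈ Finset.range b, q i ≤ (r : ℝ) := by
    rw [← Fin.sum_univ_eq_sum_range (fun i => q i) b]
    have : ∑ j : Fin b, q (j : ℕ) = ∑ j, p (σ j) := by
      apply Finset.sum_congr rfl
      intro j _
      simp only [hqdef, dif_pos j.isLt, Fin.eta]
    rw [this, Equiv.sum_comp σ p]
    exact hpsum
  have hfinal := weight_le (sValSq X) q b r (sValSq_nonneg X)
    (fun i j hij => sValSq_antitone X hij)
    (fun i hi => by simp only [hqdef, dif_pos hi]; exact hp0 _)
    (fun i hi => by simp only [hqdef, dif_pos hi]; exact hp1 _)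
    hqsum
  rw [htr, hstepA, hstepB]
  exact hfinal

lemma kyfan_achieve {a b r : ℕ} (X : Matrix (Fin a) (Fin b) ℝ) (hr : r ≤ b) :
    ∃ W : Matrix (Fin b) (Fin r) ℝ, Wᵀ * W = 1 ∧
      Matrix.trace (Wᵀ * (Xᵀ * X) * W) = ∑ i ∈ Finset.range r, sValSq X i := by
  have hH := Matrix.isHermitian_transpose_mul_self X
  set lam := hH.eigenvalues with hlam
  set σ := Tuple.sort (fun j => -lam j) with hσ
  set U : Matrix (Fin b) (Fin b) ℝ := (hH.eigenvectorUnitary : Matrix (Fin b) (Fin b) ℝ)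
    with hU
  have hspec : Xᵀ * X = U * Matrix.diagonal lam * Uᵀ := by
    have h := hH.spectral_theorem
    rw [RCLike.ofReal_real_eq_id, Function.id_comp] at h
    calc Xᵀ * X = Xᴴ * X := by rw [Matrix.conjTranspose_eq_transpose_of_trivial]
      _ = U * Matrix.diagonal lam * Uᴴ := h
      _ = U * Matrix.diagonal lam * Uᵀ := by
          rw [Matrix.conjTranspose_eq_transpose_of_trivial]
  have hUU : Uᵀ * U = 1 := by
    have h := (Matrix.mem_unitaryGroup_iff').mp hH.eigenvectorUnitary.2
    calc Uᵀ * U = Uᴴ * U := by rw [Matrix.conjTranspose_eq_transpose_of_trivial]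
      _ = star U * U := rfl
      _ = 1 := h
  set e : Fin r → Fin b := fun c => σ (Fin.castLE hr c) with he
  have hinj : Function.Injective e := by
    intro c c' hcc
    have := σ.injective hcc
    exact Fin.castLE_injective hr this
  refine ⟨Matrix.of (fun i c => U i (e c)), ?_, ?_⟩
  · ext c c'
    have : ((Matrix.of (fun i c => U i (e c)))ᵀ * Matrix.of (fun i c => U i (e c))) c c'
        = (Uᵀ * U) (e c) (e c') := by
      simp [Matrix.mul_apply, Matrix.transpose_apply]
    rw [this, hUU]
    by_cases hcc : c = c'
    · subst hcc; simp [Matrix.one_apply]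
    · rw [Matrix.one_apply_ne (fun hcon => hcc (hinj hcon)), Matrix.one_apply_ne hcc]
  · set W : Matrix (Fin b) (Fin r) ℝ := Matrix.of (fun i c => U i (e c)) with hW
    have hP : Uᵀ * W = Matrix.of (fun j c => if j = e c then (1:ℝ) else 0) := by
      ext j c
      have h1 : (Uᵀ * W) j c = (Uᵀ * U) j (e c) := by
        simp [hW, Matrix.mul_apply, Matrix.transpose_apply]
      rw [h1, hUU]
      simp [Matrix.one_apply]
    have htr : Matrix.trace (Wᵀ * (Xᵀ * X) * W)
        = Matrix.trace ((Uᵀ * W)ᵀ * Matrix.diagonal lam * (Uᵀ * W)) := by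
      rw [hspec, Matrix.transpose_mul, Matrix.transpose_transpose]
      simp only [Matrix.mul_assoc]
    rw [htr, trace_PtDP, hP]
    have hcol : ∀ j, (∑ c, ((Matrix.of (fun j c => if j = e c then (1:ℝ) else 0)) j c)^2)
        = ∑ c, (if j = e c then (1:ℝ) else 0) := by
      intro j
      apply Finset.sum_congr rfl
      intro c _
      by_cases h : j = e c <;> simp [h]
    calc ∑ j, lam j * ∑ c, ((Matrix.of (fun j c => if j = e c then (1:ℝ) else 0)) j c)^2
        = ∑ j, ∑ c, (if j = e c then lam j else 0) := by
          apply Finset.sum_congr rfl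
          intro j _
          rw [hcol, Finset.mul_sum]
          apply Finset.sum_congr rfl
          intro c _
          by_cases h : j = e c <;> simp [h]
      _ = ∑ c, ∑ j, (if j = e c then lam j else 0) := Finset.sum_comm
      _ = ∑ c : Fin r, lam (e c) := by
          apply Finset.sum_congr rfl
          intro c _
          simp
      _ = ∑ i ∈ Finset.range r, sValSq X i := by
          rw [← Fin.sum_univ_eq_sum_range (fun i => sValSq X i) r]
          apply Finset.sum_congr rfl
          intro c _
          have hcb : (c : ℕ) < b := lt_of_lt_of_le c.isLt hr
          simp only [sValSq, dif_pos hcb, ← hlam, ← hσ, he]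
          congr 1

lemma frobSq_S_mul_le {k m q : ℕ} (S : Matrix (Fin k) (Fin m) ℝ) (hS : S * Sᵀ = 1)
    (Z : Matrix (Fin m) (Fin q) ℝ) : frobSq (S * Z) ≤ frobSq Z := by
  have h2 : S * (Sᵀ * (S * Z)) = S * Z := by rw [← Matrix.mul_assoc, hS, Matrix.one_mul]
  have hzero : (Sᵀ * (S * Z))ᵀ * (Z - Sᵀ * (S * Z)) = 0 := by
    calc (Sᵀ * (S * Z))ᵀ * (Z - Sᵀ * (S * Z))
        = (S * Z)ᵀ * (S * Z) - (S * Z)ᵀ * (S * (Sᵀ * (S * Z))) := by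
          rw [Matrix.transpose_mul, Matrix.transpose_transpose, Matrix.mul_sub]
          simp only [Matrix.mul_assoc]
      _ = 0 := by rw [h2, sub_self]
  have horth : Matrix.trace ((Sᵀ * (S * Z))ᵀ * (Z - Sᵀ * (S * Z))) = 0 := by
    rw [hzero, Matrix.trace_zero]
  have hfix : frobSq (Sᵀ * (S * Z)) = frobSq (S * Z) := by
    rw [frobSq_eq_trace, frobSq_eq_trace, Matrix.transpose_mul, Matrix.transpose_transpose]
    congr 1
    calc (S * Z)ᵀ * S * (Sᵀ * (S * Z)) = (S * Z)ᵀ * (S * (Sᵀ * (S * Z))) := by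
          rw [Matrix.mul_assoc]
      _ = (S * Z)ᵀ * (S * Z) := by rw [h2]
  have hpyth := frobSq_add_of_orth horth
  have hdecomp : Sᵀ * (S * Z) + (Z - Sᵀ * (S * Z)) = Z := by abel
  rw [hdecomp, hfix] at hpyth
  linarith [frobSq_nonneg (Z - Sᵀ * (S * Z))]

theorem scw_part2 {m n k : ℕ} (A : Matrix (Fin m) (Fin n) ℝ)
    (S : Matrix (Fin k) (Fin m) ℝ) (hS : S * Sᵀ = 1)
    (V : Matrix (Fin n) (Fin k) ℝ) (hV : Vᵀ * V = 1)
    (hVspan : S * A * V * Vᵀ = S * A) (r : ℕ) :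
    ∑ i ∈ Finset.range r, (sVal (S * A) i) ^ 2 ≤
      ∑ i ∈ Finset.range r, (sVal (A * V) i) ^ 2 := by
  have hsq : ∀ (a b : ℕ) (X : Matrix (Fin a) (Fin b) ℝ) (t : ℕ), (sVal X t) ^ 2 = sValSq X t :=
    fun a b X t => Real.sq_sqrt (sValSq_nonneg X t)
  rw [Finset.sum_congr rfl (fun i _ => hsq _ _ (S * A) i),
    Finset.sum_congr rfl (fun i _ => hsq _ _ (A * V) i)]
  set r₀ := min r n with hr₀
  have hshrink : ∑ i ∈ Finset.range r, sValSq (S * A) i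
      = ∑ i ∈ Finset.range r₀, sValSq (S * A) i := by
    apply (Finset.sum_subset (Finset.range_subset_range.mpr (min_le_left r n)) ?_).symm
    intro i hi hnot
    have hir : i < r := Finset.mem_range.mp hi
    have : ¬ i < r₀ := fun hcon => hnot (Finset.mem_range.mpr hcon)
    exact sValSq_eq_zero (S * A) (by omega)
  obtain ⟨W, hWo, hWtr⟩ := kyfan_achieve (S * A) (min_le_right r n)
  set M := S * A * V with hM
  set N := A * V with hN
  set W' := Vᵀ * W with hW'
  -- rewrite (S*A)ᵀ*(S*A)
  have hrw : (S * A)ᵀ * (S * A) = V * (Mᵀ * M) * Vᵀ := by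
    conv_lhs => rw [← hVspan]
    rw [Matrix.transpose_mul M Vᵀ, Matrix.transpose_transpose]
    simp only [Matrix.mul_assoc]
  have htr1 : Matrix.trace (Wᵀ * ((S * A)ᵀ * (S * A)) * W)
      = Matrix.trace (W'ᵀ * (Mᵀ * M) * W') := by
    rw [hrw, hW', Matrix.transpose_mul Vᵀ W, Matrix.transpose_transpose]
    simp only [Matrix.mul_assoc]
  -- step: trace with M ≤ trace with N
  have hMN : M * W' = S * (N * W') := by
    rw [hM, hN]; simp only [Matrix.mul_assoc]
  have hineqA : Matrix.trace (W'ᵀ * (Mᵀ * M) * W') ≤ Matrix.trace (W'ᵀ * (Nᵀ * N) * W') := by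
    have e1 : Matrix.trace (W'ᵀ * (Mᵀ * M) * W') = frobSq (M * W') := by
      rw [frobSq_eq_trace, Matrix.transpose_mul M W']
      simp only [Matrix.mul_assoc]
    have e2 : Matrix.trace (W'ᵀ * (Nᵀ * N) * W') = frobSq (N * W') := by
      rw [frobSq_eq_trace, Matrix.transpose_mul N W']
      simp only [Matrix.mul_assoc]
    rw [e1, e2, hMN]
    exact frobSq_S_mul_le S hS (N * W')
  -- PSD condition for W'
  have hVV4 : V * Vᵀ * (V * Vᵀ) = V * Vᵀ := by
    rw [Matrix.mul_assoc, ← Matrix.mul_assoc Vᵀ V, hV, Matrix.one_mul]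
  have hQQ : (1 - V * Vᵀ) * (1 - V * Vᵀ) = 1 - V * Vᵀ := by
    rw [Matrix.mul_sub, Matrix.mul_one, Matrix.sub_mul, Matrix.one_mul, hVV4, sub_self,
      sub_zero]
  have hQidem : (1 - V * Vᵀ) * ((1 - V * Vᵀ) * W) = (1 - V * Vᵀ) * W := by
    rw [← Matrix.mul_assoc, hQQ]
  have hQsymm : (1 - V * Vᵀ)ᵀ = 1 - V * Vᵀ := by
    rw [Matrix.transpose_sub, Matrix.transpose_one, Matrix.transpose_mul,
      Matrix.transpose_transpose]
  have hkey : 1 - W'ᵀ * W' = ((1 - V * Vᵀ) * W)ᵀ * ((1 - V * Vᵀ) * W) := by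
    have h1 : ((1 - V * Vᵀ) * W)ᵀ * ((1 - V * Vᵀ) * W)
        = Wᵀ * ((1 - V * Vᵀ) * ((1 - V * Vᵀ) * W)) := by
      rw [Matrix.transpose_mul (1 - V * Vᵀ) W, hQsymm, Matrix.mul_assoc]
    have h2 : (1 - V * Vᵀ) * W = W - V * (Vᵀ * W) := by
      rw [Matrix.sub_mul, Matrix.one_mul, Matrix.mul_assoc]
    rw [h1, hQidem, h2, Matrix.mul_sub, hWo]
    congr 1
    rw [hW', Matrix.transpose_mul Vᵀ W, Matrix.transpose_transpose, Matrix.mul_assoc]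
  have hPSD : (1 - W'ᵀ * W').PosSemidef := by
    rw [hkey]; exact posSemidef_transpose_mul_self' _
  have hineqB := kyfan_ub N W' hPSD
  have hgrow : ∑ i ∈ Finset.range r₀, sValSq N i ≤ ∑ i ∈ Finset.range r, sValSq N i :=
    Finset.sum_le_sum_of_subset_of_nonneg (Finset.range_subset_range.mpr (min_le_left r n))
      (fun i _ _ => sValSq_nonneg N i)
  calc ∑ i ∈ Finset.range r, sValSq (S * A) i
      = ∑ i ∈ Finset.range r₀, sValSq (S * A) i := hshrink
    _ = Matrix.trace (Wᵀ * ((S * A)ᵀ * (S * A)) * W) := hWtr.symm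
    _ = Matrix.trace (W'ᵀ * (Mᵀ * M) * W') := htr1
    _ ≤ Matrix.trace (W'ᵀ * (Nᵀ * N) * W') := hineqA
    _ ≤ ∑ i ∈ Finset.range r₀, sValSq N i := hineqB
    _ ≤ ∑ i ∈ Finset.range r, sValSq N i := hgrow

theorem scw_part1 {m n k : ℕ} (A : Matrix (Fin m) (Fin n) ℝ)
    (S : Matrix (Fin k) (Fin m) ℝ) (hS : S * Sᵀ = 1)
    (V : Matrix (Fin n) (Fin k) ℝ) (hV : Vᵀ * V = 1)
    (hVspan : S * A * V * Vᵀ = S * A) (r : ℕ)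
    (B : Matrix (Fin m) (Fin k) ℝ) (hB : IsBestRankApprox (A * V) B r)
    (C : Matrix (Fin k) (Fin n) ℝ) (hC : IsBestRankApprox (S * A) C r) :
    frobSq (A - B * Vᵀ) ≤ frobSq (A - Sᵀ * C) := by
  -- split 1 : frobSq (A - B * Vᵀ) = frobSq (A*V - B) + frobSq (A - A*V*Vᵀ)
  have hVV : ∀ (a : ℕ) (Y : Matrix (Fin a) (Fin n) ℝ), (Y - Y * V * Vᵀ) * V = 0 := by
    intro a Y
    rw [Matrix.sub_mul, Matrix.mul_assoc (Y * V), hV, Matrix.mul_one, sub_self]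
  have split1 : frobSq (A - B * Vᵀ) = frobSq (A * V - B) + frobSq (A - A * V * Vᵀ) := by
    have hdecomp : A - B * Vᵀ = (A * V - B) * Vᵀ + (A - A * V * Vᵀ) := by
      rw [Matrix.sub_mul]; abel
    rw [hdecomp, frobSq_add_of_orth, frobSq_mul_orthright _ V hV]
    have h0 : (A - A * V * Vᵀ) * V = 0 := hVV m A
    rw [Matrix.transpose_mul, Matrix.transpose_transpose, Matrix.mul_assoc,
      Matrix.trace_mul_comm, Matrix.mul_assoc, h0, Matrix.mul_zero, Matrix.trace_zero]
  -- split 2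
  have split2 : frobSq (A * V - B) + frobSq (A - A * V * Vᵀ) ≤ frobSq (A - Sᵀ * C) := by
    set D := A - Sᵀ * C with hD
    have hdecomp : D = (D * V) * Vᵀ + (D - D * V * Vᵀ) := by
      rw [Matrix.mul_assoc]; abel
    have horth : Matrix.trace (((D * V) * Vᵀ)ᵀ * (D - D * V * Vᵀ)) = 0 := by
      rw [Matrix.transpose_mul, Matrix.transpose_transpose, Matrix.mul_assoc,
        Matrix.trace_mul_comm, Matrix.mul_assoc, hVV m D, Matrix.mul_zero, Matrix.trace_zero]
    have e1 : frobSq D = frobSq (D * V) + frobSq (D - D * V * Vᵀ) := by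
      conv_lhs => rw [hdecomp]
      rw [frobSq_add_of_orth horth, frobSq_mul_orthright _ V hV]
    -- second piece: D - D*V*Vᵀ = (A - A*V*Vᵀ) + (-(Sᵀ*C) + Sᵀ*C*V*Vᵀ)
    have hdecomp2 : D - D * V * Vᵀ
        = (A - A * V * Vᵀ) + (-(Sᵀ * (C - C * V * Vᵀ))) := by
      simp only [hD, Matrix.mul_sub, Matrix.sub_mul, Matrix.mul_assoc]
      abel
    have horth2 : Matrix.trace ((A - A * V * Vᵀ)ᵀ * (-(Sᵀ * (C - C * V * Vᵀ)))) = 0 := by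
      have hSzero : S * (A - A * V * Vᵀ) = 0 := by
        rw [Matrix.mul_sub, ← Matrix.mul_assoc, ← Matrix.mul_assoc, hVspan, sub_self]
      have : (A - A * V * Vᵀ)ᵀ * (Sᵀ * (C - C * V * Vᵀ))
          = (S * (A - A * V * Vᵀ))ᵀ * (C - C * V * Vᵀ) := by
        simp only [Matrix.transpose_mul, Matrix.mul_assoc]
      rw [Matrix.mul_neg, Matrix.trace_neg, this, hSzero, Matrix.transpose_zero,
        Matrix.zero_mul, Matrix.trace_zero, neg_zero]
    have e2 : frobSq (D - D * V * Vᵀ)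
        = frobSq (A - A * V * Vᵀ) + frobSq (-(Sᵀ * (C - C * V * Vᵀ))) := by
      rw [hdecomp2, frobSq_add_of_orth horth2]
    -- optimality of B against Y := Sᵀ * C * V
    have hrank : (Sᵀ * C * V).rank ≤ r :=
      le_trans (le_trans (Matrix.rank_mul_le_left _ V)
        (Matrix.rank_mul_le_right Sᵀ C)) hC.1
    have hopt : frobSq (A * V - B) ≤ frobSq (A * V - Sᵀ * C * V) := hB.2 _ hrank
    have hDV : D * V = A * V - Sᵀ * C * V := by
      rw [hD, Matrix.sub_mul]
    calc frobSq (A * V - B) + frobSq (A - A * V * Vᵀ)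
        ≤ frobSq (D * V) + frobSq (A - A * V * Vᵀ) := by
          rw [hDV]; linarith [hopt]
      _ ≤ frobSq (D * V) + frobSq (D - D * V * Vᵀ) := by
          rw [e2]; linarith [frobSq_nonneg (-(Sᵀ * (C - C * V * Vᵀ)))]
      _ = frobSq D := e1.symm
  linarith [split1, split2]


end SCWAux

theorem stmt_13 {m n k : ℕ} (A : Matrix (Fin m) (Fin n) ℝ)
    (S : Matrix (Fin k) (Fin m) ℝ) (hS : S * Sᵀ = 1)
    (V : Matrix (Fin n) (Fin k) ℝ) (hV : Vᵀ * V = 1)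
    -- `V` spans the row space of `S * A` (right singular vectors of `S * A`)
    (hVspan : S * A * V * Vᵀ = S * A) (r : ℕ) :
    (∀ B : Matrix (Fin m) (Fin k) ℝ, IsBestRankApprox (A * V) B r →
      ∀ C : Matrix (Fin k) (Fin n) ℝ, IsBestRankApprox (S * A) C r →
        frobSq (A - B * Vᵀ) ≤ frobSq (A - Sᵀ * C)) ∧
    ∑ i ∈ Finset.range r, (sVal (S * A) i) ^ 2 ≤
      ∑ i ∈ Finset.range r, (sVal (A * V) i) ^ 2 := by
  exact ⟨fun B hB C hC => scw_part1 A S hS V hV hVspan r B hB C hC,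
    scw_part2 A S hS V hV hVspan r⟩
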